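/- Let e be an edge of a hypergraph system and f ∈ L_1(X, B_e, μ). Then the cut norm satisfies ‖f‖_{S_{∂e}} ≤ ( ∫ ∏_{ω ∈ {0,1}^e} 𝐟(x_e^{(ω)}) dμ_e^2 )^{1/2^{|e|}}, i.e., the cut norm is bounded by the Gowers box norm of f. -/

import Mathlib

open MeasureTheory ENNReal

/-- `A ⊆ ∏ i, X i` depends only on the coordinates in `e`. -/
def DependsOnSet {n : ℕ} {X : Fin n → Type*} (e : Finset (Fin n)) (A : Set (∀ i, X i)) : Prop :=
  ∀ x y : ∀ i, X i, (∀ i ∈ e, x i = y i) → (x ∈ A ↔ y ∈ A)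

/-- A function on `∏ i, X i` depending only on the coordinates in `e`. -/
def DependsOnF {n : ℕ} {X : Fin n → Type*} (e : Finset (Fin n)) (f : (∀ i, X i) → ℝ) : Prop :=
  ∀ x y : ∀ i, X i, (∀ i ∈ e, x i = y i) → f x = f y

/-- `A` belongs to `B_e`: it is measurable and depends only on the coordinates in `e`. -/
def CubeSet {n : ℕ} {X : Fin n → Type*} [∀ i, MeasurableSpace (X i)]
    (e : Finset (Fin n)) (A : Set (∀ i, X i)) : Prop :=
  MeasurableSet A ∧ DependsOnSet e A

/-- The boundary `∂e` of `e`: subsets of `e` of size `|e| - 1`. -/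
def bdry {n : ℕ} (e : Finset (Fin n)) : Finset (Finset (Fin n)) :=
  e.powerset.filter (fun e' => e'.card + 1 = e.card)

/-- `A ∈ S_{∂e}`: `A` is an intersection `⋂_{e' ∈ ∂e} A_{e'}` with `A_{e'} ∈ B_{e'}`. -/
def SPartial {n : ℕ} {X : Fin n → Type*} [∀ i, MeasurableSpace (X i)]
    (e : Finset (Fin n)) (A : Set (∀ i, X i)) : Prop :=
  ∃ F : Finset (Fin n) → Set (∀ i, X i),
    (∀ e' ∈ bdry e, CubeSet e' (F e')) ∧ A = ⋂ e' ∈ bdry e, F e'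

/-!
Write `1_A = ∏_{k ∈ e} 1_{A_k}`, where `A_k ∈ B_{e \ {k}}` does not depend on the coordinate
`k`. Starting from `∫ f ∏_k 1_{A_k}`, treat the coordinates `k ∈ e` one at a time: integrating
first over the coordinate `k` and applying Cauchy–Schwarz in the remaining variables removes
the factor `1_{A_k}` (it is constant along that coordinate) and doubles the coordinate `k`, at
the cost of squaring the integral. After `|e|` steps every coordinate of `e` is doubled and all
indicators are gone, so `(∫_A f)^{2^{|e|}}` is bounded by the box integral. The same doubling
argument, run on absolute values, shows that each intermediate integrand is integrable.
-/

open Function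

section FiberSquare

variable {Y W : Type*} [MeasurableSpace Y] {ρ : Measure Y}

def fiberSquare (p : Y × W → ℝ) (q : (Y × Y) × W) : ℝ := p (q.1.1, q.2) * p (q.1.2, q.2)

lemma integral_fiberSquare_prodMk [SFinite ρ] (p : Y × W → ℝ) (w : W) :
    ∫ s, fiberSquare p (s, w) ∂ρ.prod ρ = (∫ t, p (t, w) ∂ρ) ^ 2 := by
  rw [sq]
  exact integral_prod_mul (fun t => p (t, w)) (fun t => p (t, w))

variable [MeasurableSpace W] {ν : Measure W} {p : Y × W → ℝ}

theorem integrable_of_integrable_fiberSquare [SFinite ρ] [IsFiniteMeasure ν]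
    (hp : Measurable p) (h : Integrable (fiberSquare p) ((ρ.prod ρ).prod ν)) :
    Integrable p (ρ.prod ν) := by
  refine ⟨hp.aestronglyMeasurable, ?_⟩
  set H : W → ℝ≥0∞ := fun w => ∫⁻ t, ‖p (t, w)‖ₑ ∂ρ
  have hsq :
      ∫⁻ q, ‖fiberSquare p q‖ₑ ∂(ρ.prod ρ).prod ν = ∫⁻ w, H w * H w ∂ν := by
    rw [lintegral_prod_symm' _ (by unfold fiberSquare; fun_prop)]
    refine lintegral_congr fun w => ?_
    simp only [fiberSquare, enorm_mul]
    have hpw : Measurable fun t => ‖p (t, w)‖ₑ := (hp.comp measurable_prodMk_right).enorm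
    exact lintegral_prod_mul hpw.aemeasurable hpw.aemeasurable
  -- `L² ⊆ L¹` on a finite measure space, in the crude form `H ≤ 1 + H²`
  have hH : ∀ w, H w ≤ 1 + H w * H w := fun w => by
    rcases le_total (H w) 1 with h1 | h1
    · exact le_add_right h1
    · exact le_add_left (le_mul_of_one_le_right' h1)
  rw [hasFiniteIntegral_iff_enorm, lintegral_prod_symm' _ hp.enorm]
  calc ∫⁻ w, H w ∂ν ≤ ∫⁻ w, 1 + H w * H w ∂ν := lintegral_mono hH
    _ = ν Set.univ + ∫⁻ q, ‖fiberSquare p q‖ₑ ∂(ρ.prod ρ).prod ν := by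
      rw [lintegral_add_left measurable_const, lintegral_const, one_mul, hsq]
    _ < ⊤ := add_lt_top.2 ⟨measure_lt_top ν _, h.2⟩

theorem sq_integral_mul_le_integral_fiberSquare [SFinite ρ] [IsProbabilityMeasure ν]
    {Q : W → ℝ} (hp : Measurable p) (hQ : AEStronglyMeasurable Q ν) (hQ1 : ∀ w, |Q w| ≤ 1)
    (h : Integrable (fiberSquare p) ((ρ.prod ρ).prod ν)) :
    (∫ x, p x * Q x.2 ∂ρ.prod ν) ^ 2 ≤ ∫ q, fiberSquare p q ∂(ρ.prod ρ).prod ν := by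
  have hp_int := integrable_of_integrable_fiberSquare hp h
  have hQn : ∀ w, ‖Q w‖ ≤ 1 := fun w => (Real.norm_eq_abs _).trans_le (hQ1 w)
  set P : W → ℝ := fun w => ∫ t, p (t, w) ∂ρ
  have hP : Integrable P ν := hp_int.integral_prod_right
  have hP2 : Integrable (fun w => P w ^ 2) ν :=
    h.integral_prod_right.congr (.of_forall (integral_fiberSquare_prodMk p))
  have hPQ : Integrable (fun w => P w * Q w) ν := hP.mul_bdd hQ (.of_forall hQn)
  have hle : ∀ w, (P w * Q w) ^ 2 ≤ P w ^ 2 := fun w => by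
    rw [mul_pow]
    exact mul_le_of_le_one_right (sq_nonneg _) ((sq_le_one_iff_abs_le_one _).2 (hQ1 w))
  have hPQ2 : Integrable (fun w => (P w * Q w) ^ 2) ν := by
    refine hP2.mono (hPQ.aestronglyMeasurable.pow 2) (.of_forall fun w => ?_)
    simpa only [norm_pow, Real.norm_eq_abs, sq_abs] using hle w
  calc (∫ x, p x * Q x.2 ∂ρ.prod ν) ^ 2 = (∫ w, P w * Q w ∂ν) ^ 2 := by
        rw [integral_prod_symm _ (hp_int.mul_bdd hQ.comp_snd (.of_forall fun x => hQn x.2))]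
        simp only [P, integral_mul_const]
    _ ≤ ∫ w, (P w * Q w) ^ 2 ∂ν :=
        (even_two.convexOn_pow (𝕜 := ℝ)).map_integral_le (continuous_pow 2).continuousOn
          isClosed_univ (.of_forall fun _ => Set.mem_univ _) hPQ hPQ2
    _ ≤ ∫ w, P w ^ 2 ∂ν := integral_mono hPQ2 hP2 hle
    _ = ∫ q, fiberSquare p q ∂(ρ.prod ρ).prod ν := by
        rw [integral_prod_symm _ h]
        exact integral_congr_ae (.of_forall fun w => (integral_fiberSquare_prodMk p w).symm)

end FiberSquare

section CubeVertex

variable {ι : Type*} [DecidableEq ι] {X : ι → Type*}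

/-- The vertex `x^{(ω)}` of the paper, for the pair of points `z = (x^{(0)}, x^{(1)})`; the
vertex `ω ∈ {0,1}^e` is encoded by the set `S` of coordinates where `ω = 1`. -/
def cubeVertex (S : Finset ι) (z : (∀ i, X i) × (∀ i, X i)) : ∀ i, X i :=
  fun i => if i ∈ S then z.2 i else z.1 i

@[simp]
lemma cubeVertex_empty (z : (∀ i, X i) × (∀ i, X i)) : cubeVertex ∅ z = z.1 := by
  ext i; simp [cubeVertex]

variable {S : Finset ι} {j : ι}

lemma cubeVertex_update_fst (hj : j ∉ S) (x y : ∀ i, X i) (t : X j) :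
    cubeVertex S (update x j t, y) = update (cubeVertex S (x, y)) j t := by
  ext i
  rcases eq_or_ne i j with rfl | hi <;> simp [cubeVertex, *]

lemma cubeVertex_update_update (hj : j ∉ S) (x y : ∀ i, X i) (t t' : X j) :
    cubeVertex S (update x j t, update y j t') = cubeVertex S (update x j t, y) := by
  ext i
  rcases eq_or_ne i j with rfl | hi <;> simp [cubeVertex, *]

lemma cubeVertex_insert_update_update (hj : j ∉ S) (x y : ∀ i, X i) (t t' : X j) :
    cubeVertex (insert j S) (update x j t, update y j t') = cubeVertex S (update x j t', y) := by
  ext i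
  rcases eq_or_ne i j with rfl | hi <;> simp [cubeVertex, *]

lemma measurable_cubeVertex [∀ i, MeasurableSpace (X i)] (S : Finset ι) :
    Measurable (cubeVertex (X := X) S) := by
  refine measurable_pi_lambda _ fun i => ?_
  by_cases hi : i ∈ S <;> simp only [cubeVertex, hi, if_true, if_false] <;> fun_prop

end CubeVertex

section CubeProd

variable {ι : Type*} [DecidableEq ι] {X : ι → Type*} {M : Type*} [CommMonoid M]

def cubeProd (F : (∀ i, X i) → M) (T : Finset ι) (z : (∀ i, X i) × (∀ i, X i)) : M :=
  ∏ S ∈ T.powerset, F (cubeVertex S z)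

variable {F G : (∀ i, X i) → M} {T : Finset ι} {j : ι}

@[simp]
lemma cubeProd_empty (F : (∀ i, X i) → M) (z : (∀ i, X i) × (∀ i, X i)) :
    cubeProd F ∅ z = F z.1 := by
  simp [cubeProd]

lemma cubeProd_mul (F G : (∀ i, X i) → M) (T : Finset ι) (z : (∀ i, X i) × (∀ i, X i)) :
    cubeProd (F * G) T z = cubeProd F T z * cubeProd G T z :=
  Finset.prod_mul_distrib

lemma cubeProd_update_fst_of_invariant (hG : ∀ x t, G (update x j t) = G x) (hj : j ∉ T)
    (x y : ∀ i, X i) (t : X j) : cubeProd G T (update x j t, y) = cubeProd G T (x, y) :=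
  Finset.prod_congr rfl fun S hS => by
    rw [cubeVertex_update_fst (fun h => hj (Finset.mem_powerset.1 hS h)), hG]

lemma cubeProd_insert_update_update (hj : j ∉ T) (x y : ∀ i, X i) (t t' : X j) :
    cubeProd F (insert j T) (update x j t, update y j t')
      = cubeProd F T (update x j t, y) * cubeProd F T (update x j t', y) := by
  rw [cubeProd, Finset.prod_powerset_insert hj]
  congr 1 <;> refine Finset.prod_congr rfl fun S hS => ?_
  · rw [cubeVertex_update_update (fun h => hj (Finset.mem_powerset.1 hS h))]
  · rw [cubeVertex_insert_update_update (fun h => hj (Finset.mem_powerset.1 hS h))]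

lemma measurable_cubeProd [∀ i, MeasurableSpace (X i)] {F : (∀ i, X i) → ℝ}
    (hF : Measurable F) (T : Finset ι) : Measurable (cubeProd F T) :=
  Finset.measurable_prod _ fun S _ => hF.comp (measurable_cubeVertex S)

end CubeProd

theorem MeasureTheory.MeasurePreserving.integral_comp_of_aestronglyMeasurable
    {α β E : Type*} [MeasurableSpace α] [MeasurableSpace β] [NormedAddCommGroup E]
    [NormedSpace ℝ E] {μ : Measure α} {ν : Measure β} {φ : α → β}
    (hφ : MeasurePreserving φ μ ν) {g : β → E} (hg : AEStronglyMeasurable g ν) :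
    ∫ x, g (φ x) ∂μ = ∫ y, g y ∂ν := by
  rw [← hφ.map_eq] at hg ⊢
  exact (integral_map hφ.measurable.aemeasurable hg).symm

section UpdateMeasurePreserving

variable {ι : Type*} [Fintype ι] [DecidableEq ι] {X : ι → Type*}
  [∀ i, MeasurableSpace (X i)] (μ : ∀ i, Measure (X i)) [∀ i, IsProbabilityMeasure (μ i)]
  (j : ι)

theorem measurePreserving_update :
    MeasurePreserving (fun p : X j × (∀ i, X i) => update p.2 j p.1)
      ((μ j).prod (Measure.pi μ)) (Measure.pi μ) := by
  refine ⟨by fun_prop, (Measure.pi_eq fun s hs => ?_).symm⟩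
  have hpre : (fun p : X j × (∀ i, X i) => update p.2 j p.1) ⁻¹' Set.univ.pi s
      = s j ×ˢ Set.univ.pi (update s j Set.univ) := by
    ext ⟨t, x⟩
    simp only [Set.mem_preimage, Set.mem_pi, Set.mem_univ, true_implies, Set.mem_prod]
    rw [forall_update_iff x (fun i a => a ∈ s i), forall_update_iff s (fun i a => x i ∈ a)]
    simp
  rw [Measure.map_apply (by fun_prop) (.univ_pi hs), hpre, Measure.prod_prod, Measure.pi_pi,
    ← Finset.mul_prod_erase _ _ (Finset.mem_univ j),
    ← Finset.mul_prod_erase _ _ (Finset.mem_univ j), update_self, measure_univ, one_mul]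
  exact congrArg _ <| Finset.prod_congr rfl fun i hi => by
    rw [update_of_ne (Finset.ne_of_mem_erase hi)]

theorem measurePreserving_update_fst :
    MeasurePreserving (fun p : X j × (∀ i, X i) × (∀ i, X i) => (update p.2.1 j p.1, p.2.2))
      ((μ j).prod ((Measure.pi μ).prod (Measure.pi μ))) ((Measure.pi μ).prod (Measure.pi μ)) :=
  ((measurePreserving_update μ j).prod (.id _)).comp
    ((measurePreserving_prodAssoc _ _ _).symm MeasurableEquiv.prodAssoc)

theorem measurePreserving_update_snd :
    MeasurePreserving (fun p : X j × (∀ i, X i) × (∀ i, X i) => (p.2.1, update p.2.2 j p.1))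
      ((μ j).prod ((Measure.pi μ).prod (Measure.pi μ))) ((Measure.pi μ).prod (Measure.pi μ)) :=
  Measure.measurePreserving_swap.comp <| (measurePreserving_update_fst μ j).comp <|
    (MeasurePreserving.id _).prod Measure.measurePreserving_swap

theorem measurePreserving_update_update :
    MeasurePreserving
      (fun p : (X j × X j) × (∀ i, X i) × (∀ i, X i) =>
        (update p.2.1 j p.1.1, update p.2.2 j p.1.2))
      (((μ j).prod (μ j)).prod ((Measure.pi μ).prod (Measure.pi μ)))
      ((Measure.pi μ).prod (Measure.pi μ)) :=
  (measurePreserving_update_fst μ j).comp <|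
    ((MeasurePreserving.id _).prod (measurePreserving_update_snd μ j)).comp
      (measurePreserving_prodAssoc _ _ _)

end UpdateMeasurePreserving

section GowersCauchySchwarz

variable {ι : Type*} [Fintype ι] [DecidableEq ι] {X : ι → Type*}
  [∀ i, MeasurableSpace (X i)] (μ : ∀ i, Measure (X i)) [∀ i, IsProbabilityMeasure (μ i)]

theorem integrable_cubeProd_mul_and_sq_integral_le (j : ι) {F G : (∀ i, X i) → ℝ}
    (hF : Measurable F) (hG : Measurable G) (hG1 : ∀ x, |G x| ≤ 1)
    (hGj : ∀ x t, G (update x j t) = G x) {T : Finset ι} (hj : j ∉ T)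
    (hint : Integrable (cubeProd F (insert j T)) ((Measure.pi μ).prod (Measure.pi μ))) :
    Integrable (cubeProd (F * G) T) ((Measure.pi μ).prod (Measure.pi μ)) ∧
      (∫ z, cubeProd (F * G) T z ∂(Measure.pi μ).prod (Measure.pi μ)) ^ 2
        ≤ ∫ z, cubeProd F (insert j T) z ∂(Measure.pi μ).prod (Measure.pi μ) := by
  have hφ₁ := measurePreserving_update_fst μ j
  have hφ₂ := measurePreserving_update_update μ j
  set p : X j × (∀ i, X i) × (∀ i, X i) → ℝ :=
    fun q => cubeProd F T (update q.2.1 j q.1, q.2.2)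
  have hp : Measurable p := (measurable_cubeProd hF T).comp hφ₁.measurable
  have hQ : ∀ z, |cubeProd G T z| ≤ 1 := fun z => by
    rw [cubeProd, Finset.abs_prod]
    exact Finset.prod_le_one (fun _ _ => abs_nonneg _) fun S _ => hG1 _
  -- Resampling the `j`-th coordinate of the first point does not affect the `G`-part, and
  -- resampling it in both points turns the product over `insert j T` into a `fiberSquare`.
  have hφ₁_comp : ∀ q, cubeProd (F * G) T (update q.2.1 j q.1, q.2.2)
      = p q * cubeProd G T q.2 :=
    fun q => by rw [cubeProd_mul, cubeProd_update_fst_of_invariant hGj hj]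
  have hφ₂_comp : ∀ q, cubeProd F (insert j T) (update q.2.1 j q.1.1, update q.2.2 j q.1.2)
      = fiberSquare p q := fun q => cubeProd_insert_update_update hj _ _ _ _
  have hsq : Integrable (fiberSquare p) (((μ j).prod (μ j)).prod _) :=
    (hφ₂.integrable_comp_of_integrable hint).congr (.of_forall hφ₂_comp)
  have hpQ : Integrable (fun q => p q * cubeProd G T q.2) ((μ j).prod _) :=
    (integrable_of_integrable_fiberSquare hp hsq).mul_bdd
      ((measurable_cubeProd hG T).comp measurable_snd).aestronglyMeasurable
      (.of_forall fun q => (Real.norm_eq_abs _).trans_le (hQ q.2))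
  have hFG : Measurable (cubeProd (F * G) T) := measurable_cubeProd (hF.mul hG) T
  refine ⟨(hφ₁.integrable_comp hFG.aestronglyMeasurable).1
    (hpQ.congr (.of_forall fun q => (hφ₁_comp q).symm)), ?_⟩
  rw [← hφ₁.integral_comp_of_aestronglyMeasurable hFG.aestronglyMeasurable,
    ← hφ₂.integral_comp_of_aestronglyMeasurable
      (measurable_cubeProd hF _).aestronglyMeasurable]
  simp only [hφ₁_comp, hφ₂_comp]
  exact sq_integral_mul_le_integral_fiberSquare hp
    (measurable_cubeProd hG T).aestronglyMeasurable hQ hsq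

theorem pow_integral_mul_prod_le_integral_cubeProd {f : (∀ i, X i) → ℝ}
    {g : ι → (∀ i, X i) → ℝ} {e : Finset ι} (hf : Measurable f)
    (hg : ∀ k ∈ e, Measurable (g k)) (hg1 : ∀ k ∈ e, ∀ x, |g k x| ≤ 1)
    (hginv : ∀ k ∈ e, ∀ x t, g k (update x k t) = g k x)
    (hbox : Integrable (cubeProd f e) ((Measure.pi μ).prod (Measure.pi μ))) :
    (∫ x, f x * ∏ k ∈ e, g k x ∂Measure.pi μ) ^ 2 ^ e.card
      ≤ ∫ z, cubeProd f e z ∂(Measure.pi μ).prod (Measure.pi μ) := by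
  have key := Finset.induction_on' (motive := fun R =>
    Integrable (cubeProd (f * ∏ k ∈ R, g k) (e \ R)) ((Measure.pi μ).prod (Measure.pi μ)) ∧
      (∫ z, cubeProd (f * ∏ k ∈ R, g k) (e \ R) z ∂(Measure.pi μ).prod (Measure.pi μ))
          ^ 2 ^ R.card
        ≤ ∫ z, cubeProd f e z ∂(Measure.pi μ).prod (Measure.pi μ)) e
    (by simpa using hbox) fun a R ha hR haR ⟨ih_int, ih_le⟩ => by
      have hsplit : e \ R = insert a (e \ insert a R) := by
        rw [Finset.sdiff_insert, Finset.insert_erase (Finset.mem_sdiff.2 ⟨ha, haR⟩)]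
      have hfac : f * ∏ k ∈ insert a R, g k = (f * ∏ k ∈ R, g k) * g a := by
        rw [Finset.prod_insert haR, mul_comm (g a), mul_assoc]
      have hmeas : Measurable (f * ∏ k ∈ R, g k) :=
        hf.mul (Finset.prod_fn R g ▸ Finset.measurable_prod R fun k hk => hg k (hR hk))
      rw [hsplit] at ih_int ih_le
      obtain ⟨h_int, h_sq⟩ := integrable_cubeProd_mul_and_sq_integral_le μ a hmeas (hg a ha)
        (hg1 a ha) (hginv a ha)
        (Finset.notMem_sdiff_of_mem_right (Finset.mem_insert_self a R)) ih_int
      rw [hfac, Finset.card_insert_of_notMem haR, pow_succ', pow_mul]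
      exact ⟨h_int, (pow_le_pow_left₀ (sq_nonneg _) h_sq _).trans ih_le⟩
  have h_fst : ∫ z, cubeProd (f * ∏ k ∈ e, g k) ∅ z ∂(Measure.pi μ).prod (Measure.pi μ)
      = ∫ x, f x * ∏ k ∈ e, g k x ∂Measure.pi μ := by
    simpa using integral_fun_fst (μ := Measure.pi μ) (ν := Measure.pi μ)
      fun x => f x * ∏ k ∈ e, g k x
  simpa only [Finset.sdiff_self, h_fst] using key.2

end GowersCauchySchwarz

theorem Real.le_rpow_one_div_of_pow_le {a b : ℝ} {N : ℕ} (ha : 0 ≤ a) (hN : N ≠ 0)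
    (h : a ^ N ≤ b) : a ≤ b ^ (1 / (N : ℝ)) := by
  rw [← Real.pow_rpow_inv_natCast ha hN, one_div]
  exact Real.rpow_le_rpow (pow_nonneg ha N) h (by positivity)

lemma bdry_eq_image_erase {n : ℕ} (e : Finset (Fin n)) : bdry e = e.image e.erase := by
  ext s
  simp only [bdry, Finset.mem_filter, Finset.mem_powerset, Finset.mem_image]
  constructor
  · rintro ⟨hs, hcard⟩
    obtain ⟨k, hk, rfl⟩ := Finset.exists_eq_insert_iff.2 ⟨hs, hcard⟩
    exact ⟨k, Finset.mem_insert_self k s, Finset.erase_insert hk⟩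
  · rintro ⟨k, hk, rfl⟩
    exact ⟨Finset.erase_subset k e, Finset.card_erase_add_one hk⟩

lemma DependsOnSet.indicator_one_update {n : ℕ} {X : Fin n → Type*} {s : Finset (Fin n)}
    {A : Set (∀ i, X i)} (hA : DependsOnSet s A) {k : Fin n} (hk : k ∉ s) (x : ∀ i, X i)
    (t : X k) : A.indicator (1 : (∀ i, X i) → ℝ) (update x k t) = A.indicator 1 x := by
  have hmem := hA (update x k t) x fun i hi => update_of_ne (ne_of_mem_of_not_mem hi hk) t x
  by_cases hx : x ∈ A <;> simp [hx, hmem]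

theorem stmt9_general {n : ℕ} {X : Fin n → Type*} [∀ i, MeasurableSpace (X i)]
    (μ : ∀ i, Measure (X i)) [∀ i, IsProbabilityMeasure (μ i)]
    (e : Finset (Fin n)) (he : 2 ≤ e.card)
    (f : (∀ i, X i) → ℝ) (hfmeas : Measurable f)
    (hbox : Integrable
      (fun z : (∀ i, X i) × (∀ i, X i) =>
        ∏ S ∈ e.powerset, f (fun i => if i ∈ S then z.2 i else z.1 i))
      ((Measure.pi μ).prod (Measure.pi μ))) :
    ∀ A : Set (∀ i, X i), SPartial e A →
      |∫ x in A, f x ∂(Measure.pi μ)|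
        ≤ (∫ z : (∀ i, X i) × (∀ i, X i),
            ∏ S ∈ e.powerset, f (fun i => if i ∈ S then z.2 i else z.1 i)
              ∂((Measure.pi μ).prod (Measure.pi μ))) ^ ((1 : ℝ) / 2 ^ e.card) := by
  rintro A ⟨F, hF, rfl⟩
  simp only [bdry_eq_image_erase, Finset.forall_mem_image] at hF
  rw [bdry_eq_image_erase, Finset.set_biInter_finset_image]
  set g : Fin n → (∀ i, X i) → ℝ := fun k => (F (e.erase k)).indicator 1
  have hA : MeasurableSet (⋂ k ∈ e, F (e.erase k)) :=
    Finset.measurableSet_biInter e fun k hk => (hF hk).1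
  have h_set : ∫ x in ⋂ k ∈ e, F (e.erase k), f x ∂Measure.pi μ
      = ∫ x, f x * ∏ k ∈ e, g k x ∂Measure.pi μ := by
    rw [← integral_indicator hA]
    congr 1 with x
    rw [prod_indicator_const_apply]
    by_cases hx : x ∈ ⋂ k ∈ e, F (e.erase k) <;> simp [hx]
  have h_gowers := pow_integral_mul_prod_le_integral_cubeProd μ (g := g) hfmeas
    (fun k hk => measurable_one.indicator (hF hk).1)
    (fun k _ x => by by_cases hx : x ∈ F (e.erase k) <;> simp [g, hx])
    (fun k hk => (hF hk).2.indicator_one_update (Finset.notMem_erase k e)) hbox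
  rw [← h_set, ← (Nat.even_pow.2 ⟨even_two, by omega⟩).pow_abs] at h_gowers
  exact_mod_cast Real.le_rpow_one_div_of_pow_le (abs_nonneg _) (by positivity) h_gowers

/-- **Lemma 6.5 (cut norm ≤ Gowers box norm).** For `f ∈ L_1(X, B_e, μ)`,
`‖f‖_{S_{∂e}} ≤ (∫ ∏_{ω ∈ {0,1}^e} f(x_e^{(ω)}) dμ_e²)^{1/2^{|e|}}`; here the family
`{0,1}^e` is parametrized by subsets `S ⊆ e`, and `x^{(S)} i = z.2 i` for `i ∈ S`,
`x^{(S)} i = z.1 i` otherwise, for `z` in the product of two copies of the space. -/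
theorem stmt9 {n : ℕ} {X : Fin n → Type*} [∀ i, MeasurableSpace (X i)]
    (μ : ∀ i, Measure (X i)) [∀ i, IsProbabilityMeasure (μ i)]
    (e : Finset (Fin n)) (he : 2 ≤ e.card)
    (f : (∀ i, X i) → ℝ) (hfmeas : Measurable f) (hfdep : DependsOnF e f)
    (hfint : Integrable f (Measure.pi μ))
    (hbox : Integrable
      (fun z : (∀ i, X i) × (∀ i, X i) =>
        ∏ S ∈ e.powerset, f (fun i => if i ∈ S then z.2 i else z.1 i))
      ((Measure.pi μ).prod (Measure.pi μ))) :
    ∀ A : Set (∀ i, X i), SPartial e A →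
      |∫ x in A, f x ∂(Measure.pi μ)|
        ≤ (∫ z : (∀ i, X i) × (∀ i, X i),
            ∏ S ∈ e.powerset, f (fun i => if i ∈ S then z.2 i else z.1 i)
              ∂((Measure.pi μ).prod (Measure.pi μ))) ^ ((1 : ℝ) / 2 ^ e.card) :=
  stmt9_general μ e he f hfmeas hbox
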